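/- arXiv:1804.06560 — 2 statements merged into one kernel-verified Lean document; each statement's English description precedes it below -/
import Mathlib

section
/- Control of the weight function along the bulk derivative: for every real a ≥ 1 and every real b there is a constant C = C(a,b) such that, with W(x,v) := (1 + |x|² + (x·v)² + |v|²⁰)^a (1+|v|)^b, for all t ∈ ℝ, all x ∈ ℝ³ and all v ∈ ℝ³ with v ≠ 0: ( |v·D_v W(x,v)| / W(x,v) + |D_v W(x,v)| / W(x,v) ) · (1 + | |t| − |x + v̂ t| |)^{−1} ≤ C. -/
noncomputable section

open MeasureTheory

abbrev E3 : Type := EuclideanSpace ℝ (Fin 3)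

/-- Euclidean dot product on `ℝ³`. -/
def dot (x y : E3) : ℝ := ∑ i, x i * y i

/-- Standard basis vectors of `ℝ³`. -/
def ee (i : Fin 3) : E3 := EuclideanSpace.single i 1

def mkE3 (f : Fin 3 → ℝ) : E3 := (WithLp.equiv 2 (Fin 3 → ℝ)).symm f

/-- Cross product on `ℝ³`. -/
def cross (a b : E3) : E3 :=
  mkE3 ![a 1 * b 2 - a 2 * b 1, a 2 * b 0 - a 0 * b 2, a 0 * b 1 - a 1 * b 0]

/-- Relativistic velocity `v̂ = v/√(1+|v|²)`. -/
def vhat (v : E3) : E3 := (Real.sqrt (1 + ‖v‖ ^ 2))⁻¹ • v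

/-- `ṽ = v/|v|`. -/
def tv (v : E3) : E3 := ‖v‖⁻¹ • v

/-- `Ṽᵢ = eᵢ × ṽ`. -/
def tV (i : Fin 3) (v : E3) : E3 := cross (ee i) (tv v)

/-- Bundled properties of the fixed cutoff function `ψ̃`. -/
structure Cutoff (ψ : ℝ → ℝ) : Prop where
  smooth : ContDiff ℝ (⊤ : ℕ∞) ψ
  even : ∀ r : ℝ, ψ (-r) = ψ r
  mem_Icc : ∀ r : ℝ, ψ r ∈ Set.Icc (0:ℝ) 1
  supp : ∀ r : ℝ, 3/2 < |r| → ψ r = 0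
  one : ∀ r : ℝ, |r| ≤ 5/4 → ψ r = 1

def psiK (ψ : ℝ → ℝ) (k : ℤ) (r : ℝ) : ℝ := ψ (r / 2 ^ k) - ψ (r / 2 ^ (k - 1))

def psiLe (ψ : ℝ → ℝ) (k : ℤ) (r : ℝ) : ℝ := ψ (r / 2 ^ k)

def psiGe (ψ : ℝ → ℝ) (k : ℤ) (r : ℝ) : ℝ := 1 - ψ (r / 2 ^ (k - 1))

def psiGe0 (ψ : ℝ → ℝ) (r : ℝ) : ℝ := 1 - ψ (2 * r)

def omegaP (x v : E3) : ℝ := dot x v + Real.sqrt ((dot x v) ^ 2 + ‖x‖ ^ 2)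

def omegaM (x v : E3) : ℝ := dot x v - Real.sqrt ((dot x v) ^ 2 + ‖x‖ ^ 2)

def omegaC (ψ : ℝ → ℝ) (x v : E3) : ℝ := psiGe0 ψ (‖x‖ ^ 2 + (dot x v) ^ 2) * omegaP x v

/-- The inhomogeneous modulation `d̃(t,x,v)`. -/
def dmod (ψ : ℝ → ℝ) (t : ℝ) (x v : E3) : ℝ :=
  t / (1 + ‖v‖ ^ 2) - omegaC ψ x v / Real.sqrt (1 + ‖v‖ ^ 2)

/-- Iterated directional derivatives along a list of directions. -/
def pds {V W : Type*} [NormedAddCommGroup V] [NormedSpace ℝ V]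
    [NormedAddCommGroup W] [NormedSpace ℝ W] (ws : List V) (f : V → W) : V → W :=
  ws.foldr (fun w g => fun p => fderiv ℝ g p w) f

/-- Fourier transform `f̂(ξ) = ∫ e^{-ix·ξ} f(x) dx`. -/
def FT (f : E3 → ℂ) (ξ : E3) : ℂ :=
  ∫ x : E3, Complex.exp (-(Complex.I * (dot x ξ : ℂ))) * f x

/-- Inverse Fourier transform. -/
def FTinv (g : E3 → ℂ) (x : E3) : ℂ :=
  (((2 * Real.pi) ^ 3 : ℝ))⁻¹ • ∫ ξ : E3, Complex.exp (Complex.I * (dot x ξ : ℂ)) * g ξ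

/-- Fourier transform in `x` of a function of `(x,v)`. -/
def FTx (f : E3 × E3 → ℂ) (ξ v : E3) : ℂ :=
  ∫ x : E3, Complex.exp (-(Complex.I * (dot x ξ : ℂ))) * f (x, v)

/-- `L²` norm. -/
def L2 {α W : Type*} [MeasureSpace α] [NormedAddCommGroup W] (f : α → W) : ℝ :=
  (∫ x, ‖f x‖ ^ 2) ^ ((1:ℝ)/2)

/-- The symbol norm `‖m‖_{S^∞_k}` (with multi-indices encoded as tuples of directions). -/
def Snorm (ψ : ℝ → ℝ) (m : E3 → ℂ) (k : ℤ) : ℝ :=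
  ∑ n ∈ Finset.range 11, ∑ α : Fin n → Fin 3,
    (2:ℝ) ^ ((n : ℤ) * k) *
      ∫ x : E3, ‖FTinv (fun ξ => pds ((List.ofFn α).map ee) m ξ * (psiK ψ k ‖ξ‖ : ℂ)) x‖

/-- The `X_n` norm of the paper (real-valued version). -/
def XnormR (ψ : ℝ → ℝ) (n : ℕ) (u : E3 → ℂ) : ℝ :=
  ⨆ k : ℤ, ⨆ ξ : E3,
    (2:ℝ) ^ (((n:ℤ)+1) * k) * ‖iteratedFDeriv ℝ n (FT u) ξ‖ * |psiK ψ k ‖ξ‖|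

/-- The weight `W(x,v) = (1+|x|²+(x·v)²+|v|²⁰)^a (1+|v|)^b`. -/
def weightW (a b : ℝ) (p : E3 × E3) : ℝ :=
  (1 + ‖p.1‖ ^ 2 + (dot p.1 p.2) ^ 2 + ‖p.2‖ ^ 20) ^ a * (1 + ‖p.2‖) ^ b

set_option maxHeartbeats 1000000

lemma sqrt_pos' (v : E3) : 0 < Real.sqrt (1 + ‖v‖ ^ 2) := by
  apply Real.sqrt_pos.2; positivity

lemma dot_inner (x y : E3) : dot x y = (inner ℝ x y : ℝ) := by
  rw [dot, PiLp.inner_apply]; simp [mul_comm]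

def Qf (x v : E3) : ℝ := 1 + ‖x‖ ^ 2 + (inner ℝ x v : ℝ) ^ 2 + ‖v‖ ^ 20

lemma Qf_pos (x v : E3) : 0 < Qf x v := by unfold Qf; positivity

-- auxiliary real lemmas
lemma aux_sq_le (N : ℝ) (hN : 0 ≤ N) : N ^ 2 ≤ 1 + N ^ 20 := by
  rcases le_total N 1 with h | h
  · nlinarith [pow_nonneg hN 20]
  · calc N ^ 2 ≤ N ^ 20 := pow_le_pow_right₀ h (by norm_num)
    _ ≤ 1 + N ^ 20 := by linarith

lemma aux_pow19_le (N : ℝ) (hN : 0 ≤ N) : N ^ 19 ≤ 1 + N ^ 20 := by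
  rcases le_total N 1 with h | h
  · nlinarith [pow_le_one₀ hN h (n := 19), pow_nonneg hN 20]
  · calc N ^ 19 ≤ N ^ 20 := pow_le_pow_right₀ h (by norm_num)
    _ ≤ 1 + N ^ 20 := by linarith

/-- Key light-cone inequality. -/
lemma key_ineq (S t u X N Q s r : ℝ) (hN : 0 ≤ N) (hX : 0 ≤ X)
    (hS2 : S ^ 2 = 1 + N ^ 2) (hS1 : 1 ≤ S)
    (hQ : Q = 1 + X ^ 2 + u ^ 2 + N ^ 20) (hr0 : 0 ≤ r)
    (hr2 : r ^ 2 = X ^ 2 + 2 * (t / S) * u + (t / S) ^ 2 * N ^ 2)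
    (hs : s = |t| - r) :
    |t / S| * (|u| + X) ≤ 18 * Q * (1 + |s|) := by
  have hS0 : (0:ℝ) < S := lt_of_lt_of_le one_pos hS1
  set τ := t / S with hτ
  set m := |u| + X with hm
  have ht' : t = τ * S := by rw [hτ, div_mul_cancel₀ t (ne_of_gt hS0)]
  have habs_t : |t| = |τ| * S := by rw [ht', abs_mul, abs_of_pos hS0]
  have hm0 : 0 ≤ m := by positivity
  have hQ1 : 1 ≤ Q := by rw [hQ]; nlinarith [sq_nonneg u, sq_nonneg X, pow_nonneg hN 20]
  have hm2 : m ^ 2 ≤ 2 * u ^ 2 + 2 * X ^ 2 := by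
    have := sq_abs u
    nlinarith [sq_nonneg (|u| - X)]
  have hSm : S * m ≤ Q := by
    have h1 := aux_sq_le N hN
    nlinarith [sq_nonneg (S - m), pow_nonneg hN 20]
  have hsa : 0 ≤ |s| := abs_nonneg s
  rcases le_or_gt |τ| (4 * (1 + m)) with hc | hc
  · have h1 : |τ| * m ≤ 4 * (1 + m) * m := by
      apply mul_le_mul_of_nonneg_right hc hm0
    have h2 : 4 * (1 + m) * m ≤ 18 * Q := by
      nlinarith [sq_nonneg (m - 1), pow_nonneg hN 20]
    nlinarith [mul_nonneg (mul_nonneg (by norm_num : (0:ℝ) ≤ 18) (by linarith : (0:ℝ) ≤ Q)) hsa]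
  · have hτ4 : 4 < |τ| := by nlinarith
    have hum : |u| < |τ| / 4 := by nlinarith [hX]
    have hXm : X < |τ| / 4 := by nlinarith [abs_nonneg u]
    have hdiff : t ^ 2 - r ^ 2 = τ ^ 2 - 2 * τ * u - X ^ 2 := by
      linear_combination (t + τ*S) * ht' - hr2 + τ^2 * hS2
    have h2tu : 2 * τ * u ≤ 2 * |τ| * |u| := by
      calc 2 * τ * u ≤ |2 * τ * u| := le_abs_self _
      _ = 2 * |τ| * |u| := by rw [abs_mul, abs_mul, abs_two]
    have h716 : (7/16) * τ ^ 2 ≤ τ ^ 2 - 2 * τ * u - X ^ 2 := by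
      nlinarith [sq_abs τ, sq_abs u, abs_nonneg τ, abs_nonneg u]
    have hrt : r < |t| := by
      have h1 : r ^ 2 < t ^ 2 := by nlinarith [sq_abs τ]
      nlinarith [sq_abs t, abs_nonneg t]
    have hs0 : 0 < s := by rw [hs]; linarith
    have heq : s * (|t| + r) = t ^ 2 - r ^ 2 := by
      rw [hs, ← sq_abs t]; ring
    have hle2 : |t| + r ≤ 2 * S * |τ| := by rw [habs_t]; nlinarith [abs_nonneg τ]
    have hsS : (7/16) * τ ^ 2 ≤ s * (2 * S * |τ|) := by
      calc (7/16) * τ ^ 2 ≤ s * (|t| + r) := by rw [heq]; linarith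
      _ ≤ s * (2 * S * |τ|) := mul_le_mul_of_nonneg_left hle2 (le_of_lt hs0)
    have htau_le : |τ| ≤ 5 * S * s := by
      have h1 : ((7/16) * |τ|) * |τ| ≤ (2 * S * s) * |τ| := by
        nlinarith [sq_abs τ]
      have h2 : (7/16) * |τ| ≤ 2 * S * s := le_of_mul_le_mul_right h1 (by linarith)
      nlinarith [mul_pos hS0 hs0]
    have hsabs : |s| = s := abs_of_pos hs0
    have h1 : |τ| * m ≤ (5 * S * s) * m := mul_le_mul_of_nonneg_right htau_le hm0
    have h2 : (5 * s) * (S * m) ≤ (5 * s) * Q := by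
      apply mul_le_mul_of_nonneg_left hSm (by linarith)
    rw [hsabs]
    nlinarith [mul_pos (by linarith : (0:ℝ) < Q) hs0]

lemma fderiv_vhat_apply (v w : E3) : fderiv ℝ vhat v w =
    (Real.sqrt (1 + ‖v‖ ^ 2))⁻¹ • w
      - ((Real.sqrt (1 + ‖v‖ ^ 2))⁻¹ ^ 3 * (inner ℝ v w : ℝ)) • v := by
  set S := Real.sqrt (1 + ‖v‖ ^ 2) with hS
  have hSpos := sqrt_pos' v
  have h1 : HasFDerivAt (fun w : E3 => 1 + ‖w‖ ^ 2)
      (2 • (innerSL ℝ v).comp (ContinuousLinearMap.id ℝ E3)) v :=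
    ((hasFDerivAt_id v).norm_sq).const_add 1
  have h2 : HasFDerivAt (fun w : E3 => Real.sqrt (1 + ‖w‖ ^ 2))
      ((1 / (2 * S)) • (2 • (innerSL ℝ v).comp (ContinuousLinearMap.id ℝ E3))) v :=
    h1.sqrt (by positivity)
  have h3 : HasFDerivAt (fun w : E3 => (Real.sqrt (1 + ‖w‖ ^ 2))⁻¹)
      ((-(S^2)⁻¹) • ((1 / (2 * S)) • (2 • (innerSL ℝ v).comp (ContinuousLinearMap.id ℝ E3)))) v := by
    have := (hasDerivAt_inv (x := S) (ne_of_gt hSpos)).comp_hasFDerivAt v h2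
    simpa [Function.comp_def] using this
  have h4 := h3.smul (hasFDerivAt_id v)
  have h5 : HasFDerivAt vhat ((Real.sqrt (1 + ‖v‖ ^ 2))⁻¹ • ContinuousLinearMap.id ℝ E3 +
      (-(S ^ 2)⁻¹ • (1 / (2 * S)) • 2 • ((innerSL ℝ) v).comp
        (ContinuousLinearMap.id ℝ E3)).smulRight (id v)) v := h4
  rw [h5.fderiv]
  simp only [ContinuousLinearMap.add_apply, ContinuousLinearMap.smul_apply,
    ContinuousLinearMap.smulRight_apply, ContinuousLinearMap.comp_apply,
    ContinuousLinearMap.coe_id', id_eq, innerSL_apply_apply, smul_smul,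
    ContinuousLinearMap.coe_smul', Pi.smul_apply, smul_eq_mul]
  rw [sub_eq_add_neg, ← neg_smul]
  congr 1
  ring

lemma fderiv_weightW_apply (a b : ℝ) (x v : E3) (hv : v ≠ 0) (p w : E3) :
    fderiv ℝ (weightW a b) (x, v) (p, w) =
      a * Qf x v ^ (a-1) * (1+‖v‖)^b *
        (2*(inner ℝ x p : ℝ) + 2*(inner ℝ x v : ℝ)*((inner ℝ x w : ℝ)+(inner ℝ v p : ℝ))
          + 20*‖v‖^18*(inner ℝ v w : ℝ))
      + Qf x v ^ a * (b * (1+‖v‖)^(b-1)) * (‖v‖⁻¹ * (inner ℝ v w : ℝ)) := by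
  have hvn : (0:ℝ) < ‖v‖ := norm_pos_iff.mpr hv
  have hW : weightW a b = fun p : E3 × E3 =>
      (1 + ‖p.1‖ ^ 2 + (inner ℝ p.1 p.2 : ℝ) ^ 2 + (‖p.2‖ ^ 2) ^ 10) ^ a
        * (1 + Real.sqrt (‖p.2‖ ^ 2)) ^ b := by
    funext q; rw [weightW, dot_inner, Real.sqrt_sq (norm_nonneg _)]; ring_nf
  have h1 : HasFDerivAt (fun q : E3 × E3 => ‖q.1‖ ^ 2)
      (2 • (innerSL ℝ x).comp (ContinuousLinearMap.fst ℝ E3 E3)) (x, v) :=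
    (hasFDerivAt_fst (p := (x,v))).norm_sq
  have h2 : HasFDerivAt (fun q : E3 × E3 => ‖q.2‖ ^ 2)
      (2 • (innerSL ℝ v).comp (ContinuousLinearMap.snd ℝ E3 E3)) (x, v) :=
    (hasFDerivAt_snd (p := (x,v))).norm_sq
  have hin : HasFDerivAt (fun q : E3 × E3 => (inner ℝ q.1 q.2 : ℝ))
      ((fderivInnerCLM ℝ (x, v)).comp
        ((ContinuousLinearMap.fst ℝ E3 E3).prod (ContinuousLinearMap.snd ℝ E3 E3))) (x, v) :=
    (hasFDerivAt_fst (p := (x,v))).inner ℝ (hasFDerivAt_snd (p := (x,v)))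
  have hin2 := (hasDerivAt_pow 2 ((inner ℝ x v : ℝ))).comp_hasFDerivAt (x,v) hin
  have h20 := (hasDerivAt_pow 10 (‖v‖ ^ 2)).comp_hasFDerivAt (x,v) h2
  have hQbase := (((h1.const_add 1).add hin2).add h20)
  have hQval : 1 + ‖x‖ ^ 2 + (inner ℝ x v : ℝ) ^ 2 + (‖v‖ ^ 2) ^ 10 = Qf x v := by
    rw [Qf]; ring
  have hQpos : (0:ℝ) < 1 + ‖x‖ ^ 2 + (inner ℝ x v : ℝ) ^ 2 + (‖v‖ ^ 2) ^ 10 := by positivity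
  have hQa := hQbase.rpow_const (p := a) (Or.inl (ne_of_gt hQpos))
  have hnrm := (h2.sqrt (by positivity)).const_add 1
  have hsq : Real.sqrt (‖v‖ ^ 2) = ‖v‖ := Real.sqrt_sq (norm_nonneg _)
  have hnb := hnrm.rpow_const (p := b) (Or.inl (by rw [hsq]; positivity))
  have hfull := hQa.mul hnb
  simp only [Function.comp_def, Pi.add_def, Pi.mul_def] at hfull
  rw [hW, hfull.fderiv]
  simp only [ContinuousLinearMap.add_apply, ContinuousLinearMap.smul_apply,
    ContinuousLinearMap.comp_apply, ContinuousLinearMap.prod_apply,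
    ContinuousLinearMap.coe_fst', ContinuousLinearMap.coe_snd', innerSL_apply_apply,
    fderivInnerCLM_apply, smul_eq_mul, hsq, hQval,
    ContinuousLinearMap.coe_smul', Pi.smul_apply, nsmul_eq_mul]
  push_cast
  rw [real_inner_comm p v]
  ring


/-- Final arithmetic assembly, stated over plain reals to keep the context small. -/
lemma assemble (a b S t u X N Q P W G QA PB1 r A B : ℝ)
    (ha : 1 ≤ a) (hN0 : 0 < N) (hX0 : 0 ≤ X)
    (hS1 : 1 ≤ S) (hS2 : S ^ 2 = 1 + N ^ 2)
    (hQval : Q = 1 + X ^ 2 + u ^ 2 + N ^ 20) (hQpos : 0 < Q)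
    (hW : W = QA * P) (hW0 : 0 < W)
    (hG0 : 0 ≤ G) (hGQ : G * Q = a * W)
    (hQA0 : 0 < QA) (hPB0 : 0 < PB1) (hPB1 : PB1 * (1 + N) = P) (hPBle : PB1 ≤ P)
    (hr0 : 0 ≤ r) (hr2 : r ^ 2 = X ^ 2 + 2 * (t / S) * u + (t / S) ^ 2 * N ^ 2)
    (hA : A = G * (2*u^2 + 20*N^18*N^2 - 2*(t/S)*u) + QA * (b * PB1) * N)
    (hB : B ≤ (2*G*|u| + 2*G*|t/S|) * X + (G * (20*N^18) + QA * (|b| * PB1) * N⁻¹) * N)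
    (hB0 : 0 ≤ B) :
    (|A| / W + B / W) * (1 + |(|t| - r)|)⁻¹ ≤ 79 * a + 2 * |b| := by
  set s := |t| - r with hsdef
  have hkey : |t/S| * (|u| + X) ≤ 18 * Q * (1 + |s|) :=
    key_ineq S t u X N Q s r hN0.le hX0 hS2 hS1 hQval hr0 hr2 hsdef
  have habsE1 : |2*u^2 + 20*N^18*N^2 - 2*(t/S)*u| ≤ 2*u^2 + 20*N^20 + 2*(|t/S| * |u|) := by
    have h1 := le_abs_self ((t/S)*u)
    have h2 := neg_abs_le ((t/S)*u)
    have h3 : |t/S| * |u| = |(t/S)*u| := (abs_mul _ _).symm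
    rw [abs_le]
    constructor <;> linarith [h1, h2, h3.le, h3.ge, sq_nonneg u, pow_nonneg hN0.le 20]
  have hHb : |QA * (b * PB1) * N| ≤ |b| * W := by
    have he : |QA * (b * PB1) * N| = QA * (|b| * PB1) * N := by
      rw [abs_mul, abs_mul, abs_mul, abs_of_nonneg hQA0.le, abs_of_nonneg hPB0.le,
        abs_of_nonneg hN0.le]
    rw [he, hW]
    have h5 : PB1 * N ≤ P := by linarith [hPB1, hPB0]
    linarith [mul_le_mul_of_nonneg_left h5 (mul_nonneg hQA0.le (abs_nonneg b))]
  have hE1W : G * (2*u^2 + 20*N^20) ≤ 22 * a * W := by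
    have h6 : 2*u^2 + 20*N^20 ≤ 22 * Q := by
      rw [hQval]; linarith [sq_nonneg X, sq_nonneg u, pow_nonneg hN0.le 20]
    linarith [mul_le_mul_of_nonneg_left h6 hG0, hGQ]
  have hAbound : |A| ≤ 22*a*W + |b| * W + 2*G*(|t/S| * |u|) := by
    rw [hA]
    calc |G * (2*u^2 + 20*N^18*N^2 - 2*(t/S)*u) + QA * (b * PB1) * N|
        ≤ |G * (2*u^2 + 20*N^18*N^2 - 2*(t/S)*u)| + |QA * (b * PB1) * N| := abs_add_le _ _
      _ ≤ G * (2*u^2 + 20*N^20 + 2*(|t/S| * |u|)) + |b| * W := by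
          rw [abs_mul, abs_of_nonneg hG0]
          exact add_le_add (mul_le_mul_of_nonneg_left habsE1 hG0) hHb
      _ ≤ 22*a*W + |b| * W + 2*G*(|t/S| * |u|) := by linarith [hE1W]
  have hBbound : B ≤ 21*a*W + |b| * W + 2*G*(|t/S| * X) := by
    have huX : 2*(|u| * X) ≤ Q := by
      rw [hQval]; linarith [sq_abs u, sq_nonneg (|u| - X), pow_nonneg hN0.le 20]
    have hG1 : 2*G*|u| * X ≤ a*W := by linarith [mul_le_mul_of_nonneg_left huX hG0, hGQ]
    have hN19Q : N^19 ≤ Q := by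
      have := aux_pow19_le N hN0.le
      rw [hQval]; linarith [sq_nonneg X, sq_nonneg u]
    have hG2 : G * (20*N^18) * N ≤ 20*a*W := by
      linarith [mul_le_mul_of_nonneg_left hN19Q hG0, hGQ]
    have hG3 : QA * (|b| * PB1) * N⁻¹ * N ≤ |b| * W := by
      rw [mul_assoc, inv_mul_cancel₀ (ne_of_gt hN0), mul_one, hW]
      linarith [mul_le_mul_of_nonneg_left hPBle (mul_nonneg hQA0.le (abs_nonneg b))]
    linarith [hB, hG1, hG2, hG3]
  have hsum : |A| + B ≤ (43*a + 2*|b|) * W + 36*a*W*(1+|s|) := by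
    have h9 := mul_le_mul_of_nonneg_left hkey (by linarith : (0:ℝ) ≤ 2*G)
    have h8 : G*Q*(1+|s|) = a*W*(1+|s|) := by rw [hGQ]
    linarith [hAbound, hBbound, h9, h8]
  have hd1 : (1:ℝ) ≤ 1 + |s| := by linarith [abs_nonneg s]
  have hd0 : (0:ℝ) < 1 + |s| := by linarith
  rw [← add_div]
  have hF : (|A| + B) / W ≤ 43*a + 2*|b| + 36*a*(1+|s|) := by
    rw [div_le_iff₀ hW0]
    linarith [hsum]
  calc (|A| + B) / W * (1+|s|)⁻¹ ≤ (43*a + 2*|b| + 36*a*(1+|s|)) * (1+|s|)⁻¹ :=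
        mul_le_mul_of_nonneg_right hF (inv_nonneg.mpr hd0.le)
    _ ≤ 79*a + 2*|b| := by
        rw [← div_eq_mul_inv, div_le_iff₀ hd0]
        nlinarith [abs_nonneg b, abs_nonneg s, mul_nonneg (by linarith [abs_nonneg b] : (0:ℝ) ≤ 43*a + 2*|b|)
          (abs_nonneg s)]


/-- Lemma 4.1 / `derivativeofweightfunction`: control of
`v·D_v W / W` and `|D_v W| / W` by the distance to the light cone. -/
theorem stmt_8 (a b : ℝ) (ha : 1 ≤ a) :
    ∃ C : ℝ, 0 < C ∧ ∀ (t : ℝ) (x v : E3), v ≠ 0 →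
      (|fderiv ℝ (weightW a b) (x, v) (-(t • fderiv ℝ vhat v v), v)| / weightW a b (x, v)
        + ‖mkE3 fun i =>
            fderiv ℝ (weightW a b) (x, v) (-(t • fderiv ℝ vhat v (ee i)), ee i)‖
              / weightW a b (x, v))
        * (1 + |(|t| - ‖x + t • vhat v‖)|)⁻¹ ≤ C := by
  refine ⟨79*a + 2*|b|, by linarith [abs_nonneg b], ?_⟩
  intro t x v hv
  have hN0 : (0:ℝ) < ‖v‖ := norm_pos_iff.mpr hv
  set S := Real.sqrt (1 + ‖v‖ ^ 2) with hSdef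
  have hS0 : 0 < S := sqrt_pos' v
  have hS2 : S ^ 2 = 1 + ‖v‖ ^ 2 := Real.sq_sqrt (by positivity)
  have hS1 : 1 ≤ S := by nlinarith [sq_nonneg ‖v‖]
  set N := ‖v‖ with hNdef
  set u := (inner ℝ x v : ℝ) with hudef
  set X := ‖x‖ with hXdef
  set Q := Qf x v with hQdef
  have hQpos : 0 < Q := Qf_pos x v
  have hQval : Q = 1 + X ^ 2 + u ^ 2 + N ^ 20 := rfl
  set P := (1+N) ^ b with hPdef
  have hPpos : 0 < P := Real.rpow_pos_of_pos (by positivity) b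
  have hWval : weightW a b (x, v) = Q ^ a * P := by
    rw [weightW, dot_inner]; rfl
  set W := Q ^ a * P with hWdef
  have hW0 : 0 < W := mul_pos (Real.rpow_pos_of_pos hQpos a) hPpos
  set G := a * Q ^ (a-1) * P with hGdef
  have hG0 : 0 ≤ G := by
    have := Real.rpow_pos_of_pos hQpos (a-1)
    have ha0 : (0:ℝ) < a := by linarith
    positivity
  have hGQ : G * Q = a * W := by
    rw [hGdef, hWdef]
    have h : Q ^ (a-1) * Q = Q ^ a := by
      rw [← Real.rpow_add_one (ne_of_gt hQpos) (a-1), sub_add_cancel]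
    linear_combination (a * P) * h
  -- value of the first term
  have hA : fderiv ℝ (weightW a b) (x, v) (-(t • fderiv ℝ vhat v v), v)
      = G * (2*u^2 + 20*N^18*N^2 - 2*(t/S)*u) + Q^a * (b * (1+N)^(b-1)) * N := by
    rw [fderiv_vhat_apply, fderiv_weightW_apply a b x v hv]
    simp only [inner_neg_right, inner_sub_right, real_inner_smul_right,
      real_inner_self_eq_norm_sq, ← hudef, ← hNdef, ← hSdef, ← hQdef, ← hPdef, ← hGdef]
    have hNne : (N:ℝ) ≠ 0 := ne_of_gt hN0
    have hSne : S ≠ 0 := ne_of_gt hS0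
    have hN2 : N ^ 2 = S ^ 2 - 1 := by linarith
    have hNN : N⁻¹ * N ^ 2 = N := by field_simp [sq]
    rw [hNN]
    congr 1
    simp only [hN2]
    field_simp
    ring
  set K1 := G * (2*u - 2*(t/S)) with hK1def
  set K2 := G * (20*N^18) + Q^a * (b * (1+N)^(b-1)) * N⁻¹ with hK2def
  have hB : ∀ i, fderiv ℝ (weightW a b) (x, v) (-(t • fderiv ℝ vhat v (ee i)), ee i)
      = K1 * x i + K2 * v i := by
    intro i
    rw [fderiv_vhat_apply, fderiv_weightW_apply a b x v hv]
    have hxi : (inner ℝ x (ee i) : ℝ) = x i := by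
      simp [ee, EuclideanSpace.inner_single_right]
    have hvi : (inner ℝ v (ee i) : ℝ) = v i := by
      simp [ee, EuclideanSpace.inner_single_right]
    simp only [inner_neg_right, inner_sub_right, real_inner_smul_right,
      real_inner_self_eq_norm_sq, hxi, hvi, ← hudef, ← hNdef, ← hSdef, ← hQdef,
      ← hPdef, ← hGdef, hK1def, hK2def]
    have hNne : (N:ℝ) ≠ 0 := ne_of_gt hN0
    have hSne : S ≠ 0 := ne_of_gt hS0
    have hN2 : N ^ 2 = S ^ 2 - 1 := by linarith
    simp only [hN2]
    field_simp
    ring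
  have hBvec : (mkE3 fun i =>
      fderiv ℝ (weightW a b) (x, v) (-(t • fderiv ℝ vhat v (ee i)), ee i))
      = K1 • x + K2 • v := by
    rw [funext hB]
    ext i
    simp [mkE3, mul_comm]
  have hQaPos : (0:ℝ) < Q ^ a := Real.rpow_pos_of_pos hQpos a
  have hPb1pos : (0:ℝ) < (1+N) ^ (b-1) := Real.rpow_pos_of_pos (by positivity) (b-1)
  have hK1b : |K1| ≤ 2*G*|u| + 2*G*|t/S| := by
    rw [hK1def, abs_mul, abs_of_nonneg hG0]
    have h1 : |2*u - 2*(t/S)| ≤ 2*|u| + 2*|t/S| := by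
      calc |2*u - 2*(t/S)| ≤ |2*u| + |2*(t/S)| := abs_sub _ _
        _ = 2*|u| + 2*|t/S| := by rw [abs_mul, abs_mul, abs_two]
    linarith [mul_le_mul_of_nonneg_left h1 hG0]
  have hK2b : |K2| ≤ G * (20*N^18) + Q^a * (|b| * (1+N)^(b-1)) * N⁻¹ := by
    rw [hK2def]
    calc |G * (20*N^18) + Q^a * (b * (1+N)^(b-1)) * N⁻¹|
        ≤ |G * (20*N^18)| + |Q^a * (b * (1+N)^(b-1)) * N⁻¹| := abs_add_le _ _
      _ ≤ G * (20*N^18) + Q^a * (|b| * (1+N)^(b-1)) * N⁻¹ := by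
          have e1 : |G * (20*N^18)| = G * (20*N^18) :=
            abs_of_nonneg (mul_nonneg hG0 (by positivity))
          have e2 : |Q^a * (b * (1+N)^(b-1)) * N⁻¹| = Q^a * (|b| * (1+N)^(b-1)) * N⁻¹ := by
            rw [abs_mul (Q^a * (b * (1+N)^(b-1))) N⁻¹, abs_mul (Q^a) (b * (1+N)^(b-1)),
              abs_mul b ((1+N)^(b-1)), abs_of_nonneg hQaPos.le,
              abs_of_nonneg hPb1pos.le, abs_of_nonneg (inv_nonneg.mpr hN0.le)]
          rw [e1, e2]
  have hBnorm : ‖K1 • x + K2 • v‖ ≤ (2*G*|u| + 2*G*|t/S|) * X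
      + (G * (20*N^18) + Q^a * (|b| * (1+N)^(b-1)) * N⁻¹) * N := by
    calc ‖K1 • x + K2 • v‖ ≤ ‖K1 • x‖ + ‖K2 • v‖ := norm_add_le _ _
      _ = |K1| * X + |K2| * N := by rw [norm_smul, norm_smul, Real.norm_eq_abs]; rfl
      _ ≤ _ := add_le_add (mul_le_mul_of_nonneg_right hK1b (norm_nonneg x))
          (mul_le_mul_of_nonneg_right hK2b hN0.le)
  have hr2 : ‖x + t • vhat v‖ ^ 2 = X^2 + 2*(t/S)*u + (t/S)^2*N^2 := by
    have h1 : (inner ℝ x (t • vhat v) : ℝ) = t * (S⁻¹ * u) := by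
      rw [vhat, real_inner_smul_right, real_inner_smul_right, ← hSdef, ← hudef]
    have h2 : ‖t • vhat v‖^2 = t^2 * (S⁻¹)^2 * N^2 := by
      rw [vhat, norm_smul, norm_smul, mul_pow, mul_pow, Real.norm_eq_abs,
        Real.norm_eq_abs, sq_abs, sq_abs, ← hSdef]
      ring
    have hSne : S ≠ 0 := ne_of_gt hS0
    rw [norm_add_sq_real, h1, h2]
    field_simp
    ring
  rw [hA, hBvec, hWval]
  exact assemble a b S t u X N Q P (Q ^ a * P) G (Q ^ a) ((1+N) ^ (b-1))
    (‖x + t • vhat v‖) _ _ ha hN0 (norm_nonneg x) hS1 hS2 hQval hQpos hWdef hW0 hG0 hGQ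
    (Real.rpow_pos_of_pos hQpos a) (Real.rpow_pos_of_pos (by positivity) (b-1))
    (by rw [← Real.rpow_add_one (by positivity : (1+N) ≠ 0) (b-1), sub_add_cancel])
    (Real.rpow_le_rpow_of_exponent_le (by linarith) (by linarith))
    (norm_nonneg _) hr2 rfl hBnorm (norm_nonneg _)
end
end

section
/- Structure of the bulk derivative of the inhomogeneous modulation: there exist an absolute constant C and functions ê₁, ê₂ : (ℝ³ \ {0})_v × ℝ³ₓ → ℝ³ (independent of t), with sup |ê₁(x,v)| + sup |ê₂(x,v)| ≤ C and ê₂(x,v) = 0 whenever |x| ≥ 3, such that for all t ∈ ℝ, all x ∈ ℝ³ and all v ∈ ℝ³ with v ≠ 0: D_v( d̃(t,·,·) )(x,v) = ê₁(x,v) · d̃(t,x,v) + ê₂(x,v), where D_v acts in (x,v) with t held fixed. -/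
noncomputable section

open MeasureTheory

/-- The bulk derivative `D_v g = ∇_v g − t ∇_v v̂·∇ₓ g` as an `ℝ³`-valued quantity,
for `g` a function of `(x,v)` (at a fixed time `t`). -/
def DvVec (t : ℝ) (g : E3 × E3 → ℝ) (p : E3 × E3) : E3 :=
  mkE3 fun i => fderiv ℝ g p (-(t • fderiv ℝ vhat p.2 (ee i)), ee i)


/-! ### Auxiliary development for Statement 13 -/

section Stmt13Aux

local notation "⟪" x ", " y "⟫" => @inner ℝ _ _ x y

lemma dot_eq_inner (x y : E3) : dot x y = ⟪x, y⟫ := by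
  simp [dot, PiLp.inner_apply, RCLike.inner_apply, conj_trivial]
  exact Finset.sum_congr rfl (fun _ _ => mul_comm _ _)

lemma inner_ee_right (y : E3) (i : Fin 3) : ⟪y, ee i⟫ = y i := by
  simpa [ee] using EuclideanSpace.inner_single_right (𝕜 := ℝ) i 1 y

lemma inner_ee_left (y : E3) (i : Fin 3) : ⟪ee i, y⟫ = y i := by
  simpa [ee] using EuclideanSpace.inner_single_left (𝕜 := ℝ) i 1 y

lemma abs_coord (y : E3) (i : Fin 3) : |y i| ≤ ‖y‖ := by
  have h := abs_real_inner_le_norm y (ee i)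
  rw [inner_ee_right] at h
  simpa [ee] using h

lemma mkE3_apply (f : Fin 3 → ℝ) (i : Fin 3) : mkE3 f i = f i := rfl

lemma norm_le_of_coords (y : E3) (c : ℝ) (h : ∀ i, |y i| ≤ c) : ‖y‖ ≤ 2 * c := by
  have hc : 0 ≤ c := le_trans (abs_nonneg _) (h 0)
  have h1 : ‖y‖ = Real.sqrt (∑ i, |y i| ^ 2) := by
    rw [EuclideanSpace.norm_eq]; norm_num
  rw [h1]
  have h2 : (∑ i, |y i| ^ 2) ≤ 3 * c ^ 2 := by
    rw [Fin.sum_univ_three]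
    have := h 0; have := h 1; have := h 2
    nlinarith [abs_nonneg (y 0), abs_nonneg (y 1), abs_nonneg (y 2), sq_nonneg c]
  calc Real.sqrt (∑ i, |y i| ^ 2) ≤ Real.sqrt (3 * c ^ 2) := Real.sqrt_le_sqrt h2
    _ ≤ Real.sqrt ((2*c)^2) := Real.sqrt_le_sqrt (by nlinarith)
    _ = 2 * c := by rw [Real.sqrt_sq (by linarith)]

namespace S13
variable (ψ : ℝ → ℝ)

def sg (v : E3) : ℝ := Real.sqrt (1 + ⟪v, v⟫)
def uu (x v : E3) : ℝ := ⟪x, v⟫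
def ss (x v : E3) : ℝ := Real.sqrt (uu x v * uu x v + ⟪x, x⟫)
def qq (x v : E3) : ℝ := ⟪x, x⟫ + uu x v * uu x v
def ch (x v : E3) : ℝ := 1 - ψ (2 * qq x v)
def dp (x v : E3) : ℝ := deriv ψ (2 * qq x v)
def om3 (x v : E3) : ℝ := uu x v + ss x v
def al (x v : E3) : ℝ :=
  2 * (-2 * dp ψ x v * om3 x v) * uu x v + ch ψ x v * (1 + uu x v / ss x v)
def be (x v : E3) : ℝ := 2 * (-2 * dp ψ x v * om3 x v) + ch ψ x v / ss x v

/-- The coefficient `ê₁`. -/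
def e1E (x v : E3) : E3 := mkE3 fun i =>
  -2 * v i / sg v ^ 2 + ch ψ x v * (v i / sg v ^ 2 + x i / ss x v)
    - 4 * dp ψ x v * om3 x v * x i

/-- The coefficient `ê₂`. -/
def e2E (x v : E3) : E3 := mkE3 fun i =>
  ch ψ x v * (ch ψ x v - 1) * (om3 x v / sg v) * (x i / ss x v + v i / sg v ^ 2)
    - 2 * dp ψ x v * x i *
      (-2 * uu x v * om3 x v / sg v + 2 * ch ψ x v * om3 x v ^ 2 / sg v)

def lin2 (a b : E3) : (E3 × E3) →L[ℝ] ℝ :=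
  ((innerSL ℝ a).comp (ContinuousLinearMap.fst ℝ E3 E3)) +
  ((innerSL ℝ b).comp (ContinuousLinearMap.snd ℝ E3 E3))

lemma lin2_apply (a b : E3) (p : E3 × E3) : lin2 a b p = ⟪a, p.1⟫ + ⟪b, p.2⟫ := rfl

variable {ψ}

lemma inner_self_nn (v : E3) : (0:ℝ) ≤ ⟪v, v⟫ := real_inner_self_nonneg
lemma one_add_pos (v : E3) : (0:ℝ) < 1 + ⟪v, v⟫ := by linarith [inner_self_nn v]
lemma sg_pos (v : E3) : 0 < sg v := Real.sqrt_pos.2 (one_add_pos v)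
lemma sg_sq (v : E3) : sg v ^ 2 = 1 + ⟪v, v⟫ := Real.sq_sqrt (one_add_pos v).le
lemma sg_ge_one (v : E3) : 1 ≤ sg v := by
  rw [show (1:ℝ) = Real.sqrt 1 by simp [Real.sqrt_one]]
  exact Real.sqrt_le_sqrt (by linarith [inner_self_nn v])
lemma ss_nonneg (x v : E3) : 0 ≤ ss x v := Real.sqrt_nonneg _
lemma qq_nonneg (x v : E3) : 0 ≤ qq x v := by
  have h1 := inner_self_nn x
  have h2 := mul_self_nonneg (uu x v)
  unfold qq; linarith
lemma ss_sq (x v : E3) : ss x v * ss x v = uu x v * uu x v + ⟪x, x⟫ := by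
  have h1 := inner_self_nn x
  have := Real.mul_self_sqrt (by nlinarith [mul_self_nonneg (uu x v)] :
    (0:ℝ) ≤ uu x v * uu x v + ⟪x, x⟫)
  simpa [ss] using this

lemma deriv_psi_zero_lt (hψ : Cutoff ψ) {r : ℝ} (h : |r| < 5/4) : deriv ψ r = 0 := by
  have hev : ψ =ᶠ[nhds r] fun _ => 1 := by
    have hop : IsOpen {y : ℝ | |y| < 5/4} := isOpen_lt (continuous_abs) continuous_const
    filter_upwards [hop.mem_nhds h] with y hy
    exact hψ.one y (le_of_lt hy)
  rw [hev.deriv_eq, deriv_const]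

lemma deriv_psi_zero_gt (hψ : Cutoff ψ) {r : ℝ} (h : 3/2 < |r|) : deriv ψ r = 0 := by
  have hev : ψ =ᶠ[nhds r] fun _ => 0 := by
    have hop : IsOpen {y : ℝ | 3/2 < |y|} := isOpen_lt continuous_const continuous_abs
    filter_upwards [hop.mem_nhds h] with y hy
    exact hψ.supp y hy
  rw [hev.deriv_eq, deriv_const]

lemma exists_deriv_bound (hψ : Cutoff ψ) : ∃ K : ℝ, 0 ≤ K ∧ ∀ r : ℝ, |deriv ψ r| ≤ K := by
  have hc : Continuous (deriv ψ) := hψ.smooth.continuous_deriv (by simp)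
  obtain ⟨M, hM⟩ := (isCompact_Icc (a := (-2:ℝ)) (b := 2)).exists_bound_of_continuousOn
    hc.continuousOn
  refine ⟨max M 0, le_max_right _ _, fun r => ?_⟩
  by_cases hr : |r| ≤ 2
  · have h2 := hM r (abs_le.mp hr)
    calc |deriv ψ r| = ‖deriv ψ r‖ := (Real.norm_eq_abs _).symm
      _ ≤ M := h2
      _ ≤ max M 0 := le_max_left _ _
  · have h0 : deriv ψ r = 0 := deriv_psi_zero_gt hψ (by linarith [not_le.mp hr])
    simp [h0, le_max_right M 0]

lemma dp_ne_zero_bounds (hψ : Cutoff ψ) {x v : E3} (h : dp ψ x v ≠ 0) :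
    qq x v ≤ 3/4 := by
  by_contra hq
  exact h (deriv_psi_zero_gt hψ (by
    rw [abs_of_nonneg (by linarith [qq_nonneg x v])]
    linarith [not_le.mp hq]))

lemma psi_eq_zero_of_big (hψ : Cutoff ψ) {x v : E3} (h : 3/4 < qq x v) :
    ψ (2 * qq x v) = 0 :=
  hψ.supp _ (by rw [abs_of_nonneg (by linarith [qq_nonneg x v])]; linarith)

lemma ch_mem (hψ : Cutoff ψ) (x v : E3) : ch ψ x v ∈ Set.Icc (0:ℝ) 1 := by
  have := hψ.mem_Icc (2 * qq x v)
  constructor <;> [skip; skip] <;> unfold ch <;>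
    [linarith [this.2]; linarith [this.1]]

lemma psi_ne_zero_bounds (hψ : Cutoff ψ) {x v : E3} (h : ψ (2 * qq x v) ≠ 0) :
    qq x v ≤ 3/4 := by
  by_contra hq
  exact h (psi_eq_zero_of_big hψ (not_le.mp hq))

lemma region_bounds (hψ : Cutoff ψ) {x v : E3} (h : qq x v ≤ 3/4) (i : Fin 3) :
    |x i| ≤ 1 ∧ |uu x v| ≤ 1 ∧ ss x v ≤ 1 ∧ |om3 x v| ≤ 2 := by
  have hu2 : uu x v * uu x v ≤ 3/4 := by
    have := inner_self_nn x; unfold qq at h; linarith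
  have hx2 : ⟪x, x⟫ ≤ 3/4 := by
    have := mul_self_nonneg (uu x v); unfold qq at h; linarith
  have hu : |uu x v| ≤ 1 := by nlinarith [abs_nonneg (uu x v), abs_mul_abs_self (uu x v)]
  have hs : ss x v ≤ 1 := by
    have h1 : uu x v * uu x v + ⟪x, x⟫ ≤ 1 := by unfold qq at h; linarith
    calc ss x v ≤ Real.sqrt 1 := Real.sqrt_le_sqrt h1
      _ = 1 := Real.sqrt_one
  have hxi : |x i| ≤ 1 := by
    have h1 : |x i| ≤ ‖x‖ := abs_coord x i
    have h2 : ‖x‖ ^ 2 = ⟪x, x⟫ := (real_inner_self_eq_norm_sq x).symm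
    nlinarith [norm_nonneg x, abs_nonneg (x i)]
  refine ⟨hxi, hu, hs, ?_⟩
  have := ss_nonneg x v
  rw [abs_le]; constructor <;> [skip; skip] <;> unfold om3 <;>
    [linarith [abs_le.mp hu]; linarith [abs_le.mp hu]]

lemma omegaC_fun_eq :
    (fun p : E3 × E3 => omegaC ψ p.1 p.2) =
      fun p : E3 × E3 => (1 - ψ (2 * (⟪p.1, p.1⟫ + ⟪p.1, p.2⟫ * ⟪p.1, p.2⟫))) *
        (⟪p.1, p.2⟫ + Real.sqrt (⟪p.1, p.2⟫ * ⟪p.1, p.2⟫ + ⟪p.1, p.1⟫)) := by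
  funext p
  simp only [omegaC, psiGe0, omegaP, dot_eq_inner, ← real_inner_self_eq_norm_sq,
    ← real_inner_self_eq_norm_mul_norm, pow_two]

lemma omegaC_val (x v : E3) : omegaC ψ x v = ch ψ x v * om3 x v := by
  have := congrFun (omegaC_fun_eq (ψ := ψ)) (x, v)
  simpa [ch, om3, uu, ss, qq] using this

lemma hasFDerivAt_omegaC (hψ : Cutoff ψ) (x v : E3) :
    HasFDerivAt (fun p : E3 × E3 => omegaC ψ p.1 p.2)
      (lin2 (be ψ x v • x + al ψ x v • v) (al ψ x v • x)) (x, v) := by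
  rw [omegaC_fun_eq]
  by_cases hq : qq x v < 5/8
  · have hps1 : ∀ y : ℝ, 0 ≤ y → y < 5/8 → ψ (2 * y) = 1 := fun y hy0 hy =>
      hψ.one _ (by rw [abs_of_nonneg (by linarith)]; linarith)
    have hdp : dp ψ x v = 0 := by
      unfold dp
      exact deriv_psi_zero_lt hψ (by
        rw [abs_of_nonneg (by linarith [qq_nonneg x v])]
        unfold qq at hq ⊢; linarith)
    have hch : ch ψ x v = 0 := by
      unfold ch
      rw [hps1 (qq x v) (qq_nonneg x v) hq]; ring
    have hcont : Continuous (fun p : E3 × E3 => ⟪p.1, p.1⟫ + ⟪p.1, p.2⟫ * ⟪p.1, p.2⟫) := by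
      have h1 : Continuous (fun p : E3 × E3 => ⟪p.1, p.1⟫) :=
        continuous_fst.inner continuous_fst
      have h2 : Continuous (fun p : E3 × E3 => ⟪p.1, p.2⟫) :=
        continuous_fst.inner continuous_snd
      exact h1.add (h2.mul h2)
    have hop : IsOpen {p : E3 × E3 | ⟪p.1, p.1⟫ + ⟪p.1, p.2⟫ * ⟪p.1, p.2⟫ < 5/8} :=
      isOpen_lt hcont continuous_const
    have hmem : (x, v) ∈ {p : E3 × E3 | ⟪p.1, p.1⟫ + ⟪p.1, p.2⟫ * ⟪p.1, p.2⟫ < 5/8} := by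
      simpa [qq, uu] using hq
    have hev : (fun p : E3 × E3 => (1 - ψ (2 * (⟪p.1, p.1⟫ + ⟪p.1, p.2⟫ * ⟪p.1, p.2⟫))) *
        (⟪p.1, p.2⟫ + Real.sqrt (⟪p.1, p.2⟫ * ⟪p.1, p.2⟫ + ⟪p.1, p.1⟫)))
        =ᶠ[nhds (x, v)] fun _ => (0:ℝ) := by
      filter_upwards [hop.mem_nhds hmem] with p hp
      have h0 : (0:ℝ) ≤ ⟪p.1, p.1⟫ + ⟪p.1, p.2⟫ * ⟪p.1, p.2⟫ := by
        have := (real_inner_self_nonneg : (0:ℝ) ≤ ⟪p.1, p.1⟫)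
        nlinarith [mul_self_nonneg (⟪p.1, p.2⟫ : ℝ)]
      rw [hps1 _ h0 hp]
      ring
    have h0 : HasFDerivAt (fun _ : E3 × E3 => (0:ℝ)) 0 (x, v) :=
      hasFDerivAt_const (𝕜 := ℝ) (0:ℝ) ((x, v) : E3 × E3)
    refine (h0.congr_of_eventuallyEq hev).congr_fderiv ?_
    apply ContinuousLinearMap.ext
    rintro ⟨w, z⟩
    simp [lin2_apply, hdp, hch, al, be]
  · have hargpos : 0 < uu x v * uu x v + ⟪x, x⟫ := by
      have h58 : (5:ℝ)/8 ≤ qq x v := not_lt.mp hq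
      unfold qq at h58
      nlinarith
    have hspos : 0 < ss x v := Real.sqrt_pos.2 hargpos
    have hu : HasFDerivAt (fun p : E3 × E3 => ⟪p.1, p.2⟫) _ (x, v) :=
      (hasFDerivAt_fst).inner ℝ (hasFDerivAt_snd)
    have hnx : HasFDerivAt (fun p : E3 × E3 => ⟪p.1, p.1⟫) _ (x, v) :=
      (hasFDerivAt_fst).inner ℝ (hasFDerivAt_fst)
    have hq2 : HasFDerivAt (fun p : E3 × E3 =>
        2 * (⟪p.1, p.1⟫ + ⟪p.1, p.2⟫ * ⟪p.1, p.2⟫)) _ (x, v) :=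
      (hnx.add (hu.mul hu)).const_mul 2
    have hpsd : HasDerivAt ψ (deriv ψ (2 * (⟪x, x⟫ + ⟪x, v⟫ * ⟪x, v⟫)))
        (2 * (⟪x, x⟫ + ⟪x, v⟫ * ⟪x, v⟫)) :=
      ((hψ.smooth.differentiable (by simp)) _).hasDerivAt
    have hχ := (hpsd.comp_hasFDerivAt (x, v) hq2).const_sub 1
    have hsq := (Real.hasDerivAt_sqrt hargpos.ne').comp_hasFDerivAt (x, v)
      ((hu.mul hu).add hnx)
    have hω := hu.add hsq
    have hB := hχ.mul hω
    refine hB.congr_fderiv ?_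
    apply ContinuousLinearMap.ext
    rintro ⟨w, z⟩
    simp only [lin2_apply, ContinuousLinearMap.add_apply, ContinuousLinearMap.coe_comp',
      Function.comp_apply, ContinuousLinearMap.smul_apply, smul_eq_mul,
      fderivInnerCLM_apply, ContinuousLinearMap.prod_apply, ContinuousLinearMap.coe_fst',
      ContinuousLinearMap.coe_snd', ContinuousLinearMap.neg_apply,
      inner_add_left, real_inner_smul_left, al, be, ch, dp, om3, uu, ss, qq]
    simp only [real_inner_comm w x, real_inner_comm z x, real_inner_comm w v,
      real_inner_comm z v]
    have hs' : Real.sqrt (⟪x, v⟫ * ⟪x, v⟫ + ⟪x, x⟫) ≠ 0 := by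
      have h : ss x v = Real.sqrt (⟪x, v⟫ * ⟪x, v⟫ + ⟪x, x⟫) := by simp [ss, uu]
      rw [← h]; exact hspos.ne'
    simp only [Pi.add_apply, Pi.mul_apply, Function.comp_apply]
    have hs2 : Real.sqrt (⟪x, v⟫ ^ 2 + ⟪x, x⟫) ≠ 0 := by rw [pow_two]; exact hs'
    field_simp
    ring

lemma fderiv_vhat (v w : E3) :
    fderiv ℝ vhat v w = (sg v)⁻¹ • w - ((sg v ^ 3)⁻¹ * ⟪v, w⟫) • v := by
  have hnv : HasFDerivAt (fun v : E3 => (1:ℝ) + ⟪v, v⟫) _ v :=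
    ((hasFDerivAt_id v).inner ℝ (hasFDerivAt_id v)).const_add 1
  have hsq := (Real.hasDerivAt_sqrt (one_add_pos v).ne').comp_hasFDerivAt v hnv
  have hinv := (hasDerivAt_inv (sg_pos v).ne').comp_hasFDerivAt v hsq
  have hsmul := hinv.smul (hasFDerivAt_id v)
  have hfun : vhat = fun y : E3 =>
      ((fun y : ℝ => y⁻¹) ∘ ((fun y => Real.sqrt y) ∘ fun v : E3 => (1:ℝ) + ⟪v, v⟫)) y • id y := by
    funext u
    show (Real.sqrt (1 + ‖u‖ ^ 2))⁻¹ • u = (Real.sqrt (1 + ⟪u, u⟫))⁻¹ • (id u)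
    rw [real_inner_self_eq_norm_sq]
    rfl
  have hv : HasFDerivAt vhat _ v :=
    hsmul.congr_of_eventuallyEq (Filter.Eventually.of_forall (fun y => congrFun hfun y))
  rw [hv.fderiv]
  simp only [ContinuousLinearMap.add_apply, ContinuousLinearMap.smul_apply,
    ContinuousLinearMap.smulRight_apply, ContinuousLinearMap.coe_comp',
    Function.comp_apply, ContinuousLinearMap.prod_apply, ContinuousLinearMap.coe_id',
    id_eq, fderivInnerCLM_apply, smul_eq_mul]
  rw [real_inner_comm w v]
  rw [sub_eq_add_neg, ← neg_smul]
  congr 1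
  congr 1
  have h0 := (sg_pos v).ne'
  show -(sg v ^ 2)⁻¹ * (1 / (2 * sg v) * (⟪w, v⟫ + ⟪w, v⟫)) = -((sg v ^ 3)⁻¹ * ⟪w, v⟫)
  field_simp
  ring


lemma coordv_bound (v : E3) (i : Fin 3) : |v i / sg v ^ 2| ≤ 1 := by
  have h1 : |v i| ≤ ‖v‖ := abs_coord v i
  have h2 : sg v ^ 2 = 1 + ‖v‖ ^ 2 := by rw [sg_sq, real_inner_self_eq_norm_sq]
  have h3 : (0:ℝ) < sg v ^ 2 := pow_pos (sg_pos v) 2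
  rw [abs_div, abs_of_pos h3, div_le_one h3, h2]
  nlinarith [norm_nonneg v, sq_nonneg (‖v‖ - 1)]

lemma coordx_bound (x v : E3) (i : Fin 3) : |x i / ss x v| ≤ 1 := by
  by_cases hx : x = 0
  · subst hx
    have : (0:E3) i = 0 := rfl
    rw [this, zero_div, abs_zero]
    norm_num
  · have hxx : (0:ℝ) < ⟪x, x⟫ := by
      rw [real_inner_self_eq_norm_sq]
      exact pow_pos (norm_pos_iff.2 hx) 2
    have hsp : 0 < ss x v := Real.sqrt_pos.2 (by nlinarith [mul_self_nonneg (uu x v)])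
    rw [abs_div, abs_of_pos hsp, div_le_one hsp]
    have h1 : |x i| ≤ ‖x‖ := abs_coord x i
    have h2 : ‖x‖ ≤ ss x v := by
      have hn : ‖x‖ = Real.sqrt ⟪x, x⟫ := by
        rw [real_inner_self_eq_norm_sq]
        exact (Real.sqrt_sq (norm_nonneg x)).symm
      rw [hn]
      exact Real.sqrt_le_sqrt (by nlinarith [mul_self_nonneg (uu x v)])
    linarith

lemma abs_ch_le (hψ : Cutoff ψ) (x v : E3) : |ch ψ x v| ≤ 1 := by
  have h := ch_mem hψ x v
  rw [abs_le]; exact ⟨by linarith [h.1, h.2], by linarith [h.1, h.2]⟩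

lemma abs_ch_sub_one_le (hψ : Cutoff ψ) (x v : E3) : |ch ψ x v - 1| ≤ 1 := by
  have h := ch_mem hψ x v
  rw [abs_le]; exact ⟨by linarith [h.1, h.2], by linarith [h.1, h.2]⟩

lemma dpom_bound (hψ : Cutoff ψ) (x v : E3) (i : Fin 3) {K : ℝ} (hK0 : 0 ≤ K)
    (hK : ∀ r : ℝ, |deriv ψ r| ≤ K) : |dp ψ x v * om3 x v * x i| ≤ 2 * K := by
  by_cases hdp : dp ψ x v = 0
  · rw [hdp]; simp; linarith
  · obtain ⟨hxi, hu, hs, hom⟩ := region_bounds hψ (dp_ne_zero_bounds hψ hdp) i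
    have hdpb : |dp ψ x v| ≤ K := hK _
    rw [abs_mul, abs_mul]
    calc |dp ψ x v| * |om3 x v| * |x i| ≤ K * 2 * 1 := by
          apply mul_le_mul _ hxi (abs_nonneg _) (by positivity)
          exact mul_le_mul hdpb hom (abs_nonneg _) hK0
      _ = 2 * K := by ring

lemma abs_add_sub (a b c : ℝ) : |a + b - c| ≤ |a| + |b| + |c| := by
  rw [sub_eq_add_neg]
  calc |a + b + -c| ≤ |a + b| + |-c| := abs_add_le _ _
    _ ≤ |a| + |b| + |c| := by rw [abs_neg]; linarith [abs_add_le a b]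

lemma e1_coord_bound (hψ : Cutoff ψ) (x v : E3) (i : Fin 3) {K : ℝ} (hK0 : 0 ≤ K)
    (hK : ∀ r : ℝ, |deriv ψ r| ≤ K) : |e1E ψ x v i| ≤ 4 + 8 * K := by
  have hE : e1E ψ x v i = -2 * (v i / sg v ^ 2)
      + ch ψ x v * (v i / sg v ^ 2 + x i / ss x v)
      - 4 * (dp ψ x v * om3 x v * x i) := by
    simp only [e1E, mkE3_apply]; ring
  rw [hE]
  have h1 : |(-2) * (v i / sg v ^ 2)| ≤ 2 := by
    rw [abs_mul]
    have := coordv_bound v i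
    rw [show |(-2:ℝ)| = 2 by norm_num]
    linarith
  have h2 : |ch ψ x v * (v i / sg v ^ 2 + x i / ss x v)| ≤ 2 := by
    rw [abs_mul]
    have ha := abs_ch_le hψ x v
    have hb : |v i / sg v ^ 2 + x i / ss x v| ≤ 2 := by
      calc |v i / sg v ^ 2 + x i / ss x v| ≤ |v i / sg v ^ 2| + |x i / ss x v| := abs_add_le _ _
        _ ≤ 2 := by linarith [coordv_bound v i, coordx_bound x v i]
    nlinarith [abs_nonneg (ch ψ x v), abs_nonneg (v i / sg v ^ 2 + x i / ss x v)]
  have h3 : |4 * (dp ψ x v * om3 x v * x i)| ≤ 8 * K := by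
    rw [abs_mul, show |(4:ℝ)| = 4 by norm_num]
    linarith [dpom_bound hψ x v i hK0 hK]
  linarith [abs_add_sub ((-2) * (v i / sg v ^ 2))
    (ch ψ x v * (v i / sg v ^ 2 + x i / ss x v)) (4 * (dp ψ x v * om3 x v * x i))]

lemma e2_coord_bound (hψ : Cutoff ψ) (x v : E3) (i : Fin 3) {K : ℝ} (hK0 : 0 ≤ K)
    (hK : ∀ r : ℝ, |deriv ψ r| ≤ K) : |e2E ψ x v i| ≤ 4 + 24 * K := by
  have hE : e2E ψ x v i = ch ψ x v * (ch ψ x v - 1) * (om3 x v / sg v)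
      * (x i / ss x v + v i / sg v ^ 2)
      - 2 * dp ψ x v * x i *
        (-2 * uu x v * om3 x v / sg v + 2 * ch ψ x v * om3 x v ^ 2 / sg v) := by
    simp only [e2E, mkE3_apply]
  rw [hE]
  have hsg1 := sg_ge_one v
  have hsgpos := sg_pos v
  have hT1 : |ch ψ x v * (ch ψ x v - 1) * (om3 x v / sg v)
      * (x i / ss x v + v i / sg v ^ 2)| ≤ 4 := by
    by_cases hch0 : ψ (2 * qq x v) = 0
    · have hch1 : ch ψ x v = 1 := by unfold ch; rw [hch0]; ring
      rw [hch1]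
      rw [show (1:ℝ) * (1 - 1) * (om3 x v / sg v) * (x i / ss x v + v i / sg v ^ 2) = 0
        by ring]
      norm_num
    · obtain ⟨hxi, hu, hs, hom⟩ := region_bounds hψ (psi_ne_zero_bounds hψ hch0) i
      have m1 : |ch ψ x v * (ch ψ x v - 1)| ≤ 1 := by
        rw [abs_mul]
        nlinarith [abs_ch_le hψ x v, abs_ch_sub_one_le hψ x v, abs_nonneg (ch ψ x v),
          abs_nonneg (ch ψ x v - 1)]
      have m2 : |om3 x v / sg v| ≤ 2 := by
        rw [abs_div, abs_of_pos hsgpos, div_le_iff₀ hsgpos]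
        nlinarith
      have m3 : |x i / ss x v + v i / sg v ^ 2| ≤ 2 := by
        calc |x i / ss x v + v i / sg v ^ 2| ≤ |x i / ss x v| + |v i / sg v ^ 2| := abs_add_le _ _
          _ ≤ 2 := by linarith [coordv_bound v i, coordx_bound x v i]
      rw [abs_mul, abs_mul]
      calc |ch ψ x v * (ch ψ x v - 1)| * |om3 x v / sg v| * |x i / ss x v + v i / sg v ^ 2|
          ≤ 1 * 2 * 2 := by
            apply mul_le_mul _ m3 (abs_nonneg _) (by norm_num)
            exact mul_le_mul m1 m2 (abs_nonneg _) (by norm_num)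
        _ = 4 := by norm_num
  have hT2 : |2 * dp ψ x v * x i *
      (-2 * uu x v * om3 x v / sg v + 2 * ch ψ x v * om3 x v ^ 2 / sg v)| ≤ 24 * K := by
    by_cases hdp : dp ψ x v = 0
    · rw [hdp]
      rw [show (2:ℝ) * 0 * x i * (-2 * uu x v * om3 x v / sg v
        + 2 * ch ψ x v * om3 x v ^ 2 / sg v) = 0 by ring]
      rw [abs_zero]; positivity
    · obtain ⟨hxi, hu, hs, hom⟩ := region_bounds hψ (dp_ne_zero_bounds hψ hdp) i
      have hinner : |(-2 * uu x v * om3 x v / sg v + 2 * ch ψ x v * om3 x v ^ 2 / sg v)| ≤ 12 := by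
        have heq : -2 * uu x v * om3 x v / sg v + 2 * ch ψ x v * om3 x v ^ 2 / sg v
            = (-2 * uu x v * om3 x v + 2 * ch ψ x v * om3 x v ^ 2) / sg v := by ring
        rw [heq, abs_div, abs_of_pos hsgpos, div_le_iff₀ hsgpos]
        have hb : |(-2 * uu x v * om3 x v + 2 * ch ψ x v * om3 x v ^ 2)| ≤ 12 := by
          have hc := ch_mem hψ x v
          have hu' := abs_le.mp hu
          have hom' := abs_le.mp hom
          rw [abs_le]
          constructor <;> nlinarith [sq_nonneg (om3 x v), hc.1, hc.2,
            mul_self_nonneg (uu x v), sq_nonneg (om3 x v - 2), sq_nonneg (om3 x v + 2),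
            mul_nonneg hc.1 (sq_nonneg (om3 x v)),
            (abs_mul_abs_self (om3 x v)) ]
        nlinarith [abs_nonneg (-2 * uu x v * om3 x v + 2 * ch ψ x v * om3 x v ^ 2)]
      have hdpb : |dp ψ x v| ≤ K := hK _
      rw [abs_mul, abs_mul, abs_mul, show |(2:ℝ)| = 2 by norm_num]
      calc 2 * |dp ψ x v| * |x i| * |(-2 * uu x v * om3 x v / sg v
          + 2 * ch ψ x v * om3 x v ^ 2 / sg v)|
          ≤ 2 * K * 1 * 12 := by
            apply mul_le_mul _ hinner (abs_nonneg _) (by positivity)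
            apply mul_le_mul _ hxi (abs_nonneg _) (by positivity)
            nlinarith
        _ = 24 * K := by ring
  calc |ch ψ x v * (ch ψ x v - 1) * (om3 x v / sg v) * (x i / ss x v + v i / sg v ^ 2)
      - 2 * dp ψ x v * x i *
        (-2 * uu x v * om3 x v / sg v + 2 * ch ψ x v * om3 x v ^ 2 / sg v)|
      ≤ |ch ψ x v * (ch ψ x v - 1) * (om3 x v / sg v) * (x i / ss x v + v i / sg v ^ 2)|
        + |2 * dp ψ x v * x i *
          (-2 * uu x v * om3 x v / sg v + 2 * ch ψ x v * om3 x v ^ 2 / sg v)| := by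
        rw [sub_eq_add_neg]
        calc _ ≤ _ := abs_add_le _ _
        _ = _ := by rw [abs_neg]
    _ ≤ 4 + 24 * K := by linarith

lemma e2_vanish (hψ : Cutoff ψ) (x v : E3) (hx : 3 ≤ ‖x‖) : e2E ψ x v = 0 := by
  have h9 : (9:ℝ) ≤ ⟪x, x⟫ := by
    rw [real_inner_self_eq_norm_sq]; nlinarith
  have hq : 3/4 < qq x v := by
    unfold qq; nlinarith [mul_self_nonneg (uu x v)]
  have hch : ch ψ x v = 1 := by
    unfold ch; rw [psi_eq_zero_of_big hψ hq]; ring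
  have hdp : dp ψ x v = 0 := by
    unfold dp
    exact deriv_psi_zero_gt hψ (by
      rw [abs_of_nonneg (by linarith [qq_nonneg x v])]; linarith)
  ext i
  rw [show ((0:E3) i : ℝ) = 0 from rfl]
  rw [show e2E ψ x v i = ch ψ x v * (ch ψ x v - 1) * (om3 x v / sg v)
      * (x i / ss x v + v i / sg v ^ 2)
      - 2 * dp ψ x v * x i *
        (-2 * uu x v * om3 x v / sg v + 2 * ch ψ x v * om3 x v ^ 2 / sg v) from rfl]
  rw [hch, hdp]
  ring

lemma main_eq (hψ : Cutoff ψ) (t : ℝ) (x v : E3) :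
    DvVec t (fun p => dmod ψ t p.1 p.2) (x, v)
      = dmod ψ t x v • e1E ψ x v + e2E ψ x v := by
  have h1v := one_add_pos v
  have hσ := sg_pos v
  have hnv : HasFDerivAt (fun p : E3 × E3 => (1:ℝ) + ⟪p.2, p.2⟫) _ (x, v) :=
    ((hasFDerivAt_snd).inner ℝ (hasFDerivAt_snd)).const_add 1
  have hAinv := (hasDerivAt_inv h1v.ne').comp_hasFDerivAt (x, v) hnv
  have hA := hAinv.const_mul t
  have hsq := (Real.hasDerivAt_sqrt h1v.ne').comp_hasFDerivAt (x, v) hnv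
  have hσinv := (hasDerivAt_inv
    (show Real.sqrt (1 + ⟪v, v⟫) ≠ 0 from hσ.ne')).comp_hasFDerivAt (x, v) hsq
  have hB := hasFDerivAt_omegaC hψ x v
  have hQ := hB.mul hσinv
  have htot := hA.sub hQ
  have hfun : (fun p : E3 × E3 => dmod ψ t p.1 p.2)
      = fun p : E3 × E3 =>
        t * ((fun y : ℝ => y⁻¹) ∘ fun p : E3 × E3 => (1:ℝ) + ⟪p.2, p.2⟫) p
          - (fun p : E3 × E3 => omegaC ψ p.1 p.2) p *
            ((fun y : ℝ => y⁻¹) ∘ ((fun y => Real.sqrt y) ∘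
              fun p : E3 × E3 => (1:ℝ) + ⟪p.2, p.2⟫)) p := by
    funext p
    simp only [dmod, div_eq_mul_inv, Function.comp_apply, ← real_inner_self_eq_norm_sq]
  have hD : HasFDerivAt (fun p : E3 × E3 => dmod ψ t p.1 p.2) _ (x, v) :=
    htot.congr_of_eventuallyEq (Filter.Eventually.of_forall (fun y => congrFun hfun y))
  have hdval : dmod ψ t x v
      = t * (sg v ^ 2)⁻¹ - (ch ψ x v * om3 x v) * (sg v)⁻¹ := by
    simp only [dmod, div_eq_mul_inv, ← real_inner_self_eq_norm_sq, omegaC_val]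
    rw [← sg_sq, Real.sqrt_sq hσ.le]
  simp only [DvVec]
  ext i
  rw [mkE3_apply, hD.fderiv]
  have hveq : fderiv ℝ vhat ((x, v) : E3 × E3).2 (ee i)
      = (sg v)⁻¹ • ee i - ((sg v ^ 3)⁻¹ * v i) • v := by
    rw [show (((x, v) : E3 × E3).2 : E3) = v from rfl, fderiv_vhat, inner_ee_right]
  rw [hveq, hdval]
  simp only [ContinuousLinearMap.sub_apply, ContinuousLinearMap.add_apply,
    ContinuousLinearMap.smul_apply, ContinuousLinearMap.coe_comp', Function.comp_apply,
    ContinuousLinearMap.prod_apply, ContinuousLinearMap.coe_snd', ContinuousLinearMap.coe_fst',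
    fderivInnerCLM_apply, lin2_apply, smul_eq_mul, ContinuousLinearMap.neg_apply,
    PiLp.add_apply, PiLp.smul_apply, e1E, e2E, mkE3_apply, omegaC_val,
    inner_add_left, real_inner_smul_left, inner_neg_right, inner_sub_right,
    real_inner_smul_right, inner_ee_right, inner_ee_left]
  simp only [al, be, ch, dp, om3, uu, qq]
  simp only [show (1:ℝ) + ⟪v, v⟫ = sg v ^ 2 from (sg_sq v).symm]
  simp only [Real.sqrt_sq hσ.le]
  simp only [show (⟪v, v⟫ : ℝ) = sg v ^ 2 - 1 from by rw [sg_sq]; ring]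
  by_cases hx : x = 0
  · subst hx
    have hz : (⟪(0:E3), v⟫ : ℝ) = 0 := inner_zero_left v
    have hzz : (⟪(0:E3), (0:E3)⟫ : ℝ) = 0 := inner_zero_left 0
    have h0i : (0:E3) i = 0 := rfl
    simp only [hz, hzz, h0i]
    rw [show (2 * ((0:ℝ) + 0 * 0)) = 0 by norm_num]
    rw [hψ.one 0 (by norm_num), deriv_psi_zero_lt hψ (by norm_num : |(0:ℝ)| < 5/4)]
    field_simp
    ring
  · have hxx : (0:ℝ) < ⟪x, x⟫ := by
      rw [real_inner_self_eq_norm_sq]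
      exact pow_pos (norm_pos_iff.2 hx) 2
    have hsp : 0 < ss x v := Real.sqrt_pos.2 (by nlinarith [mul_self_nonneg (uu x v)])
    have hssne : ss x v ≠ 0 := hsp.ne'
    field_simp
    ring

end S13

end Stmt13Aux

/-- Lemma 3.4 / `derivativesofcoefficient`: the bulk derivative of the
inhomogeneous modulation has the structure `D_v d̃ = ê₁ d̃ + ê₂` with bounded,
`t`-independent coefficients, `ê₂` vanishing for `|x| ≥ 3`. -/
theorem stmt_13 (ψ : ℝ → ℝ) (hψ : Cutoff ψ) :
    ∃ C : ℝ, 0 < C ∧ ∃ e1 e2 : E3 × E3 → E3,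
      (∀ (x v : E3), v ≠ 0 → ‖e1 (x, v)‖ + ‖e2 (x, v)‖ ≤ C) ∧
      (∀ (x v : E3), v ≠ 0 → 3 ≤ ‖x‖ → e2 (x, v) = 0) ∧
      ∀ (t : ℝ) (x v : E3), v ≠ 0 →
        DvVec t (fun p => dmod ψ t p.1 p.2) (x, v)
          = dmod ψ t x v • e1 (x, v) + e2 (x, v) := by
  obtain ⟨K, hK0, hK⟩ := S13.exists_deriv_bound hψ
  refine ⟨64 * K + 16, by linarith, fun p => S13.e1E ψ p.1 p.2, fun p => S13.e2E ψ p.1 p.2,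
    ?_, ?_, ?_⟩
  · intro x v _
    have h1 : ‖S13.e1E ψ x v‖ ≤ 2 * (4 + 8 * K) :=
      norm_le_of_coords _ _ (fun i => S13.e1_coord_bound hψ x v i hK0 hK)
    have h2 : ‖S13.e2E ψ x v‖ ≤ 2 * (4 + 24 * K) :=
      norm_le_of_coords _ _ (fun i => S13.e2_coord_bound hψ x v i hK0 hK)
    linarith
  · intro x v _ hx
    exact S13.e2_vanish hψ x v hx
  · intro t x v _
    exact S13.main_eq hψ t x v
end
end
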